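/- arXiv:2510.20418 — 4 statements merged into one kernel-verified Lean document; each statement's English description precedes it below -/
import Mathlib

section
/- If S is a local ring with maximal ideal q such that S/q has characteristic p, and G is a finite p-group, then the group ring SG is a local ring whose maximal ideal is m = I + q·1, where I is the augmentation ideal of SG; moreover SG/m ≅ S/q. -/
/-!
Let `f : SG → S/q` be the augmentation followed by reduction mod `q`; its kernel is `m`, and it
suffices to show that `m` lies in the Jacobson radical of `SG`. Since `SG` is a finite `S`-algebra,
Nakayama's lemma puts `q·SG` in the Jacobson radical, so it is enough that every element of the
augmentation ideal of `(S/q)G` is nilpotent. That is proved by induction on `|G|`: for a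
nontrivial central `z` of order `p^e`, the kernel of `kG → k[G/⟨z⟩]` is `kG·(z - 1)`, and
`(z - 1)^(p^e) = z^(p^e) - 1 = 0` in characteristic `p`.
-/

open MonoidAlgebra

theorem Subgroup.zpowers_normal_of_mem_center {G : Type*} [Group G] {z : G}
    (hz : z ∈ Subgroup.center G) : (Subgroup.zpowers z).Normal where
  conj_mem h hh g := by
    rwa [Subgroup.mem_center_iff.mp (Subgroup.zpowers_le.mpr hz hh) g, mul_inv_cancel_right]

namespace MonoidAlgebra

variable {k G : Type*} [CommRing k] [Group G]

theorem single_mul_pow_sub_single_mem_span (z g : G) (n : ℕ) (r : k) :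
    single (g * z ^ n) r - single g r ∈ Ideal.span {single z (1 : k) - 1} := by
  rw [Ideal.mem_span_singleton']
  refine ⟨single g r * ∑ i ∈ Finset.range n, single z (1 : k) ^ i, ?_⟩
  rw [mul_assoc, geom_sum_mul, mul_sub, single_pow, one_pow, single_mul_single, mul_one, mul_one]

theorem mem_span_single_sub_one_of_mapDomain_eq_zero {z : G} (hz : IsOfFinOrder z) {x : k[G]}
    (hx : mapDomain (QuotientGroup.mk : G → G ⧸ Subgroup.zpowers z) x = 0) :
    x ∈ Ideal.span {single z (1 : k) - 1} := by
  let σ : G → G := fun g => (QuotientGroup.mk g : G ⧸ Subgroup.zpowers z).out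
  have hσ : mapDomain σ x = 0 := by
    have : mapDomain σ x = mapDomain (Quotient.out : G ⧸ Subgroup.zpowers z → G)
        (mapDomain QuotientGroup.mk x) := by
      ext; simp [mapDomain, ← Finsupp.mapDomain_comp]; rfl
    rw [this, hx, mapDomain_zero]
  have key (y : k[G]) : y - mapDomain σ y ∈ Ideal.span {single z (1 : k) - 1} := by
    induction y using MonoidAlgebra.induction_linear with
    | zero => simp [mapDomain_zero]
    | add a b ha hb => simpa [mapDomain_add, add_sub_add_comm] using add_mem ha hb
    | single g r =>
      obtain ⟨⟨h, hh⟩, hgh⟩ := QuotientGroup.mk_out_eq_mul (Subgroup.zpowers z) g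
      obtain ⟨n, rfl⟩ := hz.mem_powers_iff_mem_zpowers.mpr hh
      rw [mapDomain_single, show σ g = g * z ^ n from hgh, ← neg_mem_iff, neg_sub]
      exact single_mul_pow_sub_single_mem_span z g n r
  simpa [hσ] using key x

theorem single_sub_one_pow_eq_zero (p : ℕ) [Fact p.Prime] [CharP k p] {z : G} {n : ℕ}
    (hz : z ^ p ^ n = 1) : (single z (1 : k) - 1) ^ p ^ n = 0 := by
  have : CharP k[G] p := charP_of_injective_algebraMap' k p
  rw [sub_pow_char_pow_of_commute p n (Commute.one_right _), single_pow, one_pow, hz, one_pow,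
    one_def, sub_self]

theorem lift_one_mapDomainRingHom {H : Type*} [Group H] (f : G →* H) (x : k[G]) :
    lift k k H 1 (mapDomainRingHom k f x) = lift k k G 1 x := by
  induction x using MonoidAlgebra.induction_linear with
  | zero => simp
  | add a b ha hb => simp only [map_add, ha, hb]
  | single g r => simp

theorem eq_single_one_lift_one [Subsingleton G] (x : k[G]) : x = single 1 (lift k k G 1 x) := by
  induction x using MonoidAlgebra.induction_linear with
  | zero => simp
  | add a b ha hb => rw [map_add, single_add, ← ha, ← hb]
  | single g r => simp [Subsingleton.elim g 1]

end MonoidAlgebra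

theorem IsPGroup.isNilpotent_of_lift_one_eq_zero {p : ℕ} [Fact p.Prime] {k : Type*} [CommRing k]
    [CharP k p] {G : Type*} [Group G] [Finite G] (hG : IsPGroup p G) {x : k[G]}
    (hx : lift k k G 1 x = 0) : IsNilpotent x := by
  induction hcard : Nat.card G using Nat.strong_induction_on generalizing G with
  | _ n ih =>
  rcases subsingleton_or_nontrivial G with hG1 | hG1
  · exact ⟨1, by rw [pow_one, eq_single_one_lift_one x, hx, single_zero]⟩
  have := hG.center_nontrivial
  obtain ⟨⟨z, hzc⟩, hz1⟩ := exists_ne (1 : Subgroup.center G)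
  have := Subgroup.zpowers_normal_of_mem_center hzc
  set H := Subgroup.zpowers z
  obtain ⟨m, hm⟩ := hG z
  have hcard_lt : Nat.card (G ⧸ H) < n := by
    rw [← hcard, ← Subgroup.index_bot (G := G)]
    refine Subgroup.index_strictAnti (bot_lt_iff_ne_bot.mpr ?_)
    exact Subgroup.zpowers_ne_bot.mpr fun h => hz1 (Subtype.ext h)
  obtain ⟨N, hN⟩ := ih _ hcard_lt (hG.to_quotient H)
    (x := mapDomainRingHom k (QuotientGroup.mk' H) x) (by rwa [lift_one_mapDomainRingHom]) rfl
  obtain ⟨w, hw⟩ := Ideal.mem_span_singleton'.mp <|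
    mem_span_single_sub_one_of_mapDomain_eq_zero (k := k) (isOfFinOrder_of_finite z)
      (x := x ^ N) ((map_pow _ x N).trans hN)
  refine ⟨N * p ^ m, ?_⟩
  have hcomm : Commute w (single z 1 - 1) :=
    ((single_commute (Subgroup.mem_center_iff.mp hzc · |>.symm) (Commute.all 1) w).sub_left
      (Commute.one_left w)).symm
  rw [pow_mul, ← hw, hcomm.mul_pow, single_sub_one_pow_eq_zero p hm, mul_zero]

section

variable {A : Type*} [Ring A]

theorem Ring.le_jacobson_of_exists_pow_mem {J : Ideal A}
    (h : ∀ x ∈ J, ∃ n : ℕ, x ^ n ∈ Ring.jacobson A) : J ≤ Ring.jacobson A := by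
  intro x hx
  rw [← Ideal.jacobson_bot, Ideal.mem_jacobson_iff]
  intro y
  obtain ⟨n, hn⟩ := h (-(y * x)) (J.neg_mem (J.mul_mem_left y hx))
  rw [← Ideal.jacobson_bot, Ideal.mem_jacobson_iff] at hn
  obtain ⟨z, hz⟩ := hn (-1)
  set s := ∑ i ∈ Finset.range n, (-(y * x)) ^ i
  refine ⟨z * s, ?_⟩
  rw [Ideal.mem_bot] at hz ⊢
  calc z * s * y * x + z * s - 1 = z * (s * (1 - -(y * x))) - 1 := by noncomm_ring
    _ = 0 := by rw [geom_sum_mul_neg, ← hz]; noncomm_ring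

theorem Ideal.IsMaximal.isMaximal_iff_eq_of_le_jacobson {M : Ideal A} (hM : M.IsMaximal)
    (hjac : M ≤ Ring.jacobson A) (J : Ideal A) : J.IsMaximal ↔ J = M :=
  ⟨fun hJ => (hM.eq_of_le hJ.ne_top (hjac.trans (Ring.jacobson_le_of_isMaximal J))).symm,
    fun h => h ▸ hM⟩

variable {S : Type*} [CommRing S] [Algebra S A]

theorem Submodule.mul_mem_ideal_smul_top {I : Ideal S} {x : A}
    (hx : x ∈ I • (⊤ : Submodule S A)) (a : A) : a * x ∈ I • (⊤ : Submodule S A) := by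
  have := Submodule.mem_map_of_mem (f := LinearMap.mulLeft S a) hx
  rw [Submodule.map_smul''] at this
  exact Submodule.smul_mono le_rfl le_top this

theorem Ring.ideal_smul_top_le_jacobson [Module.Finite S A] {I : Ideal S}
    (hI : I ≤ (⊥ : Ideal S).jacobson) :
    I • (⊤ : Submodule S A) ≤ (Ring.jacobson A).restrictScalars S := by
  intro x hx
  rw [Submodule.restrictScalars_mem, ← Ideal.jacobson_bot, Ideal.mem_jacobson_iff]
  intro y
  have hrange : LinearMap.range (LinearMap.mulRight S (y * x + 1)) = ⊤ := by
    refine top_le_iff.mp (Submodule.le_of_le_smul_of_le_jacobson_bot Module.Finite.fg_top hI ?_)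
    intro a _
    have : a = a * (y * x + 1) - a * (y * x) := by noncomm_ring
    rw [this]
    exact Submodule.sub_mem_sup (LinearMap.mem_range_self _ a)
      (Submodule.mul_mem_ideal_smul_top (Submodule.mul_mem_ideal_smul_top hx y) a)
  obtain ⟨z, hz⟩ := hrange ▸ Submodule.mem_top (x := (1 : A))
  refine ⟨z, ?_⟩
  rw [Ideal.mem_bot, ← hz, LinearMap.mulRight_apply]
  noncomm_ring

theorem AlgHom.ker_quotientMk_comp_eq_sup (ε : A →ₐ[S] S) (I : Ideal S) :
    RingHom.ker ((Ideal.Quotient.mk I).comp (ε : A →+* S)) =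
      RingHom.ker ε ⊔ I.map (algebraMap S A) := by
  have hε (s : S) : ε (algebraMap S A s) = s := ε.commutes s
  refine le_antisymm (fun x hx => ?_) (sup_le (fun x hx => ?_) ?_)
  · rw [RingHom.mem_ker, RingHom.comp_apply, Ideal.Quotient.eq_zero_iff_mem] at hx
    rw [← sub_add_cancel x (algebraMap S A (ε x))]
    refine Submodule.add_mem_sup ?_ (Ideal.mem_map_of_mem _ hx)
    simp [hε]
  · rw [RingHom.mem_ker] at hx ⊢
    simp [hx]
  · rw [Ideal.map_le_iff_le_comap]
    intro s hs
    simpa [hε, Ideal.Quotient.eq_zero_iff_mem] using hs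

end

namespace MonoidAlgebra

variable {S : Type*} [CommRing S]

theorem mem_ideal_smul_top_of_forall_coeff_mem {G : Type*} {I : Ideal S} {x : S[G]}
    (hx : ∀ g, x.coeff g ∈ I) : x ∈ I • (⊤ : Submodule S S[G]) := by
  rw [← sum_coeff_single x]
  refine Submodule.finsuppSum_mem _ _ _ _ fun g _ => ?_
  rw [← mul_one (x.coeff g), ← smul_eq_mul, ← smul_single]
  exact Submodule.smul_mem_smul (hx g) Submodule.mem_top

theorem lift_one_mapRingHom {G T : Type*} [Monoid G] [CommRing T] (φ : S →+* T) (x : S[G]) :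
    lift T T G 1 (mapRingHom G φ x) = φ (lift S S G 1 x) := by
  induction x using MonoidAlgebra.induction_linear with
  | zero => simp
  | add a b ha hb => simp only [map_add, ha, hb]
  | single g r => simp

theorem ker_quotientMk_comp_lift_one_le_jacobson (p : ℕ) [Fact p.Prime] {G : Type*} [Group G]
    [Finite G] (hG : IsPGroup p G) {I : Ideal S} [CharP (S ⧸ I) p]
    (hI : I ≤ (⊥ : Ideal S).jacobson) :
    RingHom.ker ((Ideal.Quotient.mk I).comp (lift S S G 1 : S[G] →+* S)) ≤
      Ring.jacobson S[G] := by
  refine Ring.le_jacobson_of_exists_pow_mem fun c hc => ?_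
  have hc' : lift (S ⧸ I) (S ⧸ I) G 1 (mapRingHom G (Ideal.Quotient.mk I) c) = 0 := by
    rw [lift_one_mapRingHom]; exact hc
  obtain ⟨n, hn⟩ := hG.isNilpotent_of_lift_one_eq_zero hc'
  refine ⟨n, Ring.ideal_smul_top_le_jacobson hI <|
    mem_ideal_smul_top_of_forall_coeff_mem fun g => ?_⟩
  rw [← Ideal.Quotient.eq_zero_iff_mem, ← coeff_mapRingHom, map_pow, hn]
  rfl

end MonoidAlgebra

/-- **The group ring of a finite `p`-group over a local ring is local.**
If `S` is a (commutative) local ring with maximal ideal `q` such that `S/q` has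
characteristic `p`, and `G` is a finite `p`-group, then the group ring `SG` is
a local ring whose maximal ideal is `m = I ⊔ q·SG`, where `I` is the
augmentation ideal of `SG`; moreover `SG/m ≅ S/q`.  (Locality with specified
maximal ideal is expressed by: an ideal of `SG` is maximal iff it equals `m`;
the isomorphism `SG/m ≅ S/q` is expressed by a surjective ring homomorphism
`SG → S/q` with kernel `m`.) -/
theorem monoidAlgebra_isLocalRing_of_isPGroup
    (p : ℕ) [Fact p.Prime]
    (S : Type) [CommRing S] [IsLocalRing S]
    [CharP (S ⧸ IsLocalRing.maximalIdeal S) p]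
    (G : Type) [Group G] [Finite G] (hG : IsPGroup p G)
    (I : Ideal (MonoidAlgebra S G))
    (hI : I = RingHom.ker
      (((MonoidAlgebra.lift S S G) 1 : MonoidAlgebra S G →ₐ[S] S) : MonoidAlgebra S G →+* S))
    (m : Ideal (MonoidAlgebra S G))
    (hm : m = I ⊔ Ideal.map (algebraMap S (MonoidAlgebra S G)) (IsLocalRing.maximalIdeal S)) :
    (∀ J : Ideal (MonoidAlgebra S G), J.IsMaximal ↔ J = m) ∧
      ∃ f : MonoidAlgebra S G →+* (S ⧸ IsLocalRing.maximalIdeal S),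
        Function.Surjective f ∧ RingHom.ker f = m := by
  set q := IsLocalRing.maximalIdeal S
  let := Ideal.Quotient.field q
  let f : S[G] →+* S ⧸ q := (Ideal.Quotient.mk q).comp (lift S S G 1 : S[G] →+* S)
  have hf : Function.Surjective f :=
    Ideal.Quotient.mk_surjective.comp fun s => ⟨single 1 s, by simp⟩
  have hker : RingHom.ker f = m := by
    rw [hm, hI]
    exact AlgHom.ker_quotientMk_comp_eq_sup _ q
  have hjac : RingHom.ker f ≤ Ring.jacobson S[G] :=
    ker_quotientMk_comp_lift_one_le_jacobson p hG (IsLocalRing.maximalIdeal_le_jacobson ⊥)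
  refine ⟨fun J => ?_, f, hf, hker⟩
  rw [← hker]
  exact (RingHom.ker_isMaximal_of_surjective f hf).isMaximal_iff_eq_of_le_jacobson hjac J
end

section
/- If k is a field of characteristic p and G is a finite p-group, then the augmentation ideal of the group algebra kG is nilpotent. -/
/-!
Induction on `|G|`. A nontrivial `p`-group has a central element `z ≠ 1`, and `z - 1` is central
and nilpotent in `kG`, because `(z - 1) ^ p ^ e = z ^ p ^ e - 1 = 0` in characteristic `p`.
The augmentation of `kG` factors through `k[G/⟨z⟩]`, whose augmentation ideal is nilpotent by
induction, say `I_{G/⟨z⟩} ^ n = 0`. Hence `I_G ^ n` lies in the kernel of `kG → k[G/⟨z⟩]`,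
which is the left ideal `kG (z - 1)`; as `z - 1` is central, `(kG (z - 1)) ^ m = kG (z - 1) ^ m`,
which vanishes for `m = p ^ e`.
-/

open MonoidAlgebra

theorem Subgroup.normal_of_le_center {G : Type*} [Group G] {H : Subgroup G}
    (h : H ≤ Subgroup.center G) : H.Normal :=
  ⟨fun n hn g => by rwa [Subgroup.mem_center_iff.mp (h hn) g, mul_inv_cancel_right]⟩

theorem Subgroup.card_quotient_lt_card {G : Type*} [Group G] [Finite G] {H : Subgroup G}
    (hH : H ≠ ⊥) : Nat.card (G ⧸ H) < Nat.card G := by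
  rw [H.card_eq_card_quotient_mul_card_subgroup]
  exact lt_mul_of_one_lt_right Nat.card_pos ((H.one_lt_card_iff_ne_bot).mpr hH)

theorem isNilpotent_sub_one_of_pow_char_pow_eq_one {A : Type*} [Ring A] (p : ℕ) [Fact p.Prime]
    [CharP A p] {x : A} {e : ℕ} (hx : x ^ p ^ e = 1) : IsNilpotent (x - 1) :=
  ⟨p ^ e, by rw [sub_pow_char_pow_of_commute p e (Commute.one_right x), one_pow, hx, sub_self]⟩

namespace Submodule

variable {R A : Type*} [CommSemiring R] [Semiring A] [Algebra R A]

theorem list_prod_mem_pow {M : Submodule R A} {l : List A} (h : ∀ a ∈ l, a ∈ M) :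
    l.prod ∈ M ^ l.length := by
  induction l with
  | nil => exact one_le.mp le_rfl
  | cons a l ih =>
    rw [List.prod_cons, List.length_cons, pow_succ']
    exact mul_mem_mul (h a List.mem_cons_self) (ih fun b hb => h b (List.mem_cons_of_mem a hb))

end Submodule

namespace Ideal

variable {R A : Type*} [CommSemiring R] [Semiring A] [Algebra R A]

theorem restrictScalars_span_singleton_pow_le {c : A} (hc : ∀ a, Commute a c) (n : ℕ) :
    (span {c}).restrictScalars R ^ n ≤ (span {c ^ n}).restrictScalars R := by
  induction n with
  | zero => simp
  | succ n ih =>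
    rw [pow_succ, Submodule.mul_le]
    intro x hx y hy
    obtain ⟨a, rfl⟩ := mem_span_singleton'.mp (ih hx)
    obtain ⟨b, rfl⟩ := mem_span_singleton'.mp hy
    refine mem_span_singleton'.mpr ⟨a * b, ?_⟩
    rw [pow_succ, mul_assoc a (c ^ n), ← mul_assoc (c ^ n) b, ← ((hc b).pow_right n).eq]
    simp only [mul_assoc]

theorem isNilpotent_restrictScalars_span_singleton {c : A} (hc : ∀ a, Commute a c)
    (h : IsNilpotent c) : IsNilpotent ((span {c}).restrictScalars R) := by
  obtain ⟨n, hn⟩ := h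
  refine ⟨n, le_bot_iff.mp ?_⟩
  simpa [hn] using restrictScalars_span_singleton_pow_le (R := R) hc n

end Ideal

namespace MonoidAlgebra

section Semiring

variable (k G : Type*) [CommSemiring k] [Monoid G]

/-- Taken as a `k`-submodule rather than an ideal, so that its powers are the products of
submodules of the `k`-algebra `kG`. -/
noncomputable def augmentationIdeal : Submodule k (MonoidAlgebra k G) :=
  LinearMap.ker (lift k k G 1).toLinearMap

variable {k G}

theorem lift_one_comp_mapDomainAlgHom {H : Type*} [Monoid H] (f : G →* H) :
    (lift k k H 1).comp (mapDomainAlgHom k k f) = lift k k G 1 := by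
  ext; simp

theorem map_augmentationIdeal_le {H : Type*} [Monoid H] (f : G →* H) :
    (augmentationIdeal k G).map (mapDomainAlgHom k k f).toLinearMap ≤ augmentationIdeal k H := by
  rintro _ ⟨x, hx, rfl⟩
  change lift k k H 1 (mapDomainAlgHom k k f x) = 0
  rwa [← AlgHom.comp_apply, lift_one_comp_mapDomainAlgHom]

theorem augmentationIdeal_pow_le_ker {H : Type*} [Monoid H] (f : G →* H) {n : ℕ}
    (hn : augmentationIdeal k H ^ n = 0) :
    augmentationIdeal k G ^ n ≤ LinearMap.ker (mapDomainAlgHom k k f).toLinearMap := by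
  rw [LinearMap.ker, ← Submodule.map_le_iff_le_comap, Submodule.map_pow, ← Submodule.zero_eq_bot,
    ← hn]
  exact pow_le_pow_left' (map_augmentationIdeal_le f) n

theorem augmentationIdeal_eq_bot [Subsingleton G] : augmentationIdeal k G = ⊥ := by
  refine eq_bot_iff.mpr fun x hx => ?_
  rw [← (uniqueAlgEquiv (A := k) k G).symm_apply_apply x, uniqueAlgEquiv_symm_apply] at hx ⊢
  simp_all [augmentationIdeal]

end Semiring

section Ring

variable {k G : Type*} [CommRing k] [Group G]

theorem ker_mapDomainAlgHom_mk_le {N : Subgroup G} [N.Normal] {J : Ideal (MonoidAlgebra k G)}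
    (hJ : ∀ n ∈ N, of k G n - 1 ∈ J) :
    RingHom.ker (mapDomainAlgHom k k (QuotientGroup.mk' N)) ≤ J := by
  -- `ψ` replaces each `g` by the chosen representative `r` of `gN`, and `g - r = r (r⁻¹ g - 1)`.
  let ψ := mapDomainLinearMap k k (fun g : G => (g : G ⧸ N).out)
  have hψ : ∀ x, x - ψ x ∈ J := by
    intro x
    induction x using MonoidAlgebra.induction_on with
    | of g =>
      set r := (g : G ⧸ N).out
      have hr : r⁻¹ * g ∈ N := QuotientGroup.eq.mp (QuotientGroup.out_eq' _)
      have : of k G g - ψ (of k G g) = of k G r * (of k G (r⁻¹ * g) - 1) := by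
        simp [ψ, r, mul_sub]
      exact this ▸ J.mul_mem_left _ (hJ _ hr)
    | add x y hx hy => simpa [add_sub_add_comm] using J.add_mem hx hy
    | smul a x hx => simpa [smul_sub] using Submodule.smul_of_tower_mem J a hx
  intro x hx
  have hψx : ψ x =
      mapDomainLinearMap k k Quotient.out (mapDomainAlgHom k k (QuotientGroup.mk' N) x) := by
    change mapDomainLinearMap k k (Quotient.out ∘ QuotientGroup.mk) x = _
    rw [mapDomainLinearMap_comp]
    rfl
  rw [RingHom.mem_ker] at hx
  rw [hx, map_zero] at hψx
  simpa [hψx] using hψ x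

theorem commute_of_mem_center {z : G} (hz : z ∈ Subgroup.center G) (a : MonoidAlgebra k G) :
    Commute a (of k G z) := by
  induction a using MonoidAlgebra.induction_on with
  | of g => rw [Commute, SemiconjBy, ← map_mul, ← map_mul, Subgroup.mem_center_iff.mp hz g]
  | add x y hx hy => exact hx.add_left hy
  | smul r x hx => exact hx.smul_left r

theorem of_sub_one_mem_span_of_mem_zpowers [Finite G] {z g : G} (hg : g ∈ Subgroup.zpowers z) :
    of k G g - 1 ∈ Ideal.span {of k G z - 1} := by
  obtain ⟨m, rfl⟩ := mem_powers_iff_mem_zpowers.mpr hg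
  exact Ideal.mem_span_singleton'.mpr ⟨_, by rw [map_pow, geom_sum_mul]⟩

theorem isNilpotent_augmentationIdeal_of_quotient_zpowers [Finite G] {z : G}
    (hz : z ∈ Subgroup.center G) (hz_nil : IsNilpotent (of k G z - 1))
    [(Subgroup.zpowers z).Normal]
    (h : IsNilpotent (augmentationIdeal k (G ⧸ Subgroup.zpowers z))) :
    IsNilpotent (augmentationIdeal k G) := by
  obtain ⟨n, hn⟩ := h
  set J := Ideal.span {of k G z - 1}
  have hker : RingHom.ker (mapDomainAlgHom k k (QuotientGroup.mk' (Subgroup.zpowers z))) ≤ J :=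
    ker_mapDomainAlgHom_mk_le fun _ => of_sub_one_mem_span_of_mem_zpowers
  have hle : augmentationIdeal k G ^ n ≤ J.restrictScalars k :=
    (augmentationIdeal_pow_le_ker _ hn).trans fun _ hx => hker hx
  obtain ⟨m, hm⟩ := Ideal.isNilpotent_restrictScalars_span_singleton (R := k)
    (fun a => (commute_of_mem_center hz a).sub_right (Commute.one_right a)) hz_nil
  refine ⟨n * m, le_antisymm ?_ bot_le⟩
  rw [pow_mul, ← hm]
  exact pow_le_pow_left' hle m

theorem isNilpotent_augmentationIdeal (p : ℕ) [Fact p.Prime] [CharP k p] [Finite G]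
    (hG : IsPGroup p G) : IsNilpotent (augmentationIdeal k G) := by
  induction hcard : Nat.card G using Nat.strong_induction_on generalizing G with
  | _ N ih =>
  rcases subsingleton_or_nontrivial G with _ | _
  · exact ⟨1, by rw [pow_one, augmentationIdeal_eq_bot]; rfl⟩
  have := hG.center_nontrivial
  obtain ⟨⟨z, hz⟩, hz1⟩ := exists_ne (1 : Subgroup.center G)
  have := Subgroup.normal_of_le_center (Subgroup.zpowers_le.mpr hz)
  have := charP_of_injective_algebraMap' k (A := MonoidAlgebra k G) p
  obtain ⟨e, he⟩ := hG z
  refine isNilpotent_augmentationIdeal_of_quotient_zpowers hz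
    (isNilpotent_sub_one_of_pow_char_pow_eq_one p (by rw [← map_pow, he, map_one]))
    (ih _ ?_ (hG.to_quotient _) rfl)
  rw [← hcard]
  exact Subgroup.card_quotient_lt_card
    (Subgroup.zpowers_eq_bot.not.mpr fun h => hz1 (Subtype.ext h))

end Ring

end MonoidAlgebra

/-- **The augmentation ideal of `kG` is nilpotent.**
If `k` is a field of characteristic `p` and `G` is a finite `p`-group, then the
augmentation ideal `I` of the group algebra `kG` (the kernel of the `k`-algebra
map `kG → k` sending each group element to `1`) is nilpotent: there is `n` such
that every product of `n` elements of `I` vanishes (i.e. `I ^ n = 0`). -/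
theorem augmentationIdeal_isNilpotent
    (p : ℕ) [Fact p.Prime] (k : Type) [Field k] [CharP k p]
    (G : Type) [Group G] [Finite G] (hG : IsPGroup p G)
    (I : Ideal (MonoidAlgebra k G))
    (hI : I = RingHom.ker
      (((MonoidAlgebra.lift k k G) 1 : MonoidAlgebra k G →ₐ[k] k) : MonoidAlgebra k G →+* k)) :
    ∃ n : ℕ, ∀ l : List (MonoidAlgebra k G),
      l.length = n → (∀ a ∈ l, a ∈ I) → l.prod = 0 := by
  subst hI
  obtain ⟨n, hn⟩ := isNilpotent_augmentationIdeal (k := k) p hG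
  refine ⟨n, fun l hl hl_mem => ?_⟩
  have hprod := Submodule.list_prod_mem_pow (M := augmentationIdeal k G) hl_mem
  rwa [hl, hn] at hprod
end

section
/- Let G be a finite group, A a G-module, and N a normal subgroup of G such that H^i(N,A) = 0 for i = 1, …, n−1 (n ≥ 1). Then the sequence 0 → H^n(G/N, A^N) → H^n(G,A) → H^n(N,A), with maps given by inflation and restriction, is exact. -/
/-! ## Tate cohomology of a finite group via the complete standard resolution

The action of `G` on the abelian group `A` is recorded by an explicit
homomorphism `σ : G →* AddAut A`. -/

/-- The multiplicative group structure (composition) on `AddAut A`, as in the older Mathlib. -/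
instance addAutGroupOld {A : Type*} [Add A] : Group (AddAut A) where
  mul g h := AddEquiv.trans h g
  one := AddEquiv.refl _
  inv := AddEquiv.symm
  mul_assoc _ _ _ := rfl
  one_mul _ := rfl
  mul_one _ := rfl
  inv_mul_cancel := AddEquiv.self_trans_symm

namespace TateAux

variable {G : Type} [Group G] [Fintype G] {A : Type} [AddCommGroup A]

/-- Inhomogeneous cochain differential (as in the bar resolution). -/
def cochainD (σ : G →* AddAut A) (m : ℕ) : ((Fin m → G) → A) →+ ((Fin (m + 1) → G) → A) where
  toFun f := fun g =>
    σ (g 0) (f (fun i => g i.succ)) +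
      ∑ j : Fin (m + 1), ((-1 : ℤ) ^ ((j : ℕ) + 1)) • f (Fin.contractNth j (· * ·) g)
  map_zero' := by funext g; simp
  map_add' f₁ f₂ := by
    funext g
    simp only [Pi.add_apply, map_add, smul_add, Finset.sum_add_distrib]
    abel

/-- Inhomogeneous chain differential (transposed to functions; `G` is finite). -/
def chainD (σ : G →* AddAut A) (m : ℕ) : ((Fin (m + 1) → G) → A) →+ ((Fin m → G) → A) where
  toFun f := fun h =>
    ∑ g : G,
      (σ g⁻¹ (f (Fin.cons g h)) +
        (∑ j : Fin m, ((-1 : ℤ) ^ ((j : ℕ) + 1)) •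
          f (Fin.insertNth j.castSucc g (Function.update h j (g⁻¹ * h j)))) +
        ((-1 : ℤ) ^ (m + 1)) • f (Fin.snoc h g))
  map_zero' := by funext h; simp
  map_add' f₁ f₂ := by
    funext h
    simp only [Pi.add_apply, map_add, smul_add, Finset.sum_add_distrib]
    abel

/-- The norm map, splicing the chain and cochain parts of the complete resolution. -/
def normD (σ : G →* AddAut A) : ((Fin 0 → G) → A) →+ ((Fin 0 → G) → A) where
  toFun f := fun h => ∑ g : G, σ g (f h)
  map_zero' := by funext h; simp
  map_add' f₁ f₂ := by funext h; simp [Finset.sum_add_distrib]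

/-- Dimension function for the complete standard complex. -/
def tdim : ℤ → ℕ
  | .ofNat k => k
  | .negSucc k => k

/-- The complete standard complex (in degree `n`, inhomogeneous cochains `G^(tdim n) → A`). -/
def TC (G A : Type) (n : ℤ) : Type := (Fin (tdim n) → G) → A

instance (n : ℤ) : AddCommGroup (TC G A n) :=
  inferInstanceAs (AddCommGroup ((Fin (tdim n) → G) → A))

/-- The differential of the complete standard complex. -/
def tateD (σ : G →* AddAut A) : ∀ n : ℤ, TC G A n →+ TC G A (n + 1)
  | .ofNat k => cochainD σ k
  | .negSucc 0 => normD σ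
  | .negSucc (k + 1) => chainD σ k

/-- The incoming differential in degree `n`. -/
def tateDpred (σ : G →* AddAut A) (n : ℤ) : TC G A (n - 1) →+ TC G A n :=
  cast (congrArg (fun m : ℤ => TC G A (n - 1) →+ TC G A m) (by omega : n - 1 + 1 = n))
    (tateD σ (n - 1))

/-- Tate cohomology `Ĥ^n(G, A)` of the finite group `G` with coefficients in the
`G`-module `(A, σ)`. -/
def tateH (σ : G →* AddAut A) (n : ℤ) : Type :=
  (AddMonoidHom.ker (tateD σ n)) ⧸
    ((AddMonoidHom.range (tateDpred σ n)).addSubgroupOf (AddMonoidHom.ker (tateD σ n)))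

/-- `A` is cohomologically trivial over `G`: the Tate cohomology groups of all
subgroups of `G` in all degrees vanish. -/
def IsCohomologicallyTrivial (σ : G →* AddAut A) : Prop :=
  ∀ (S : Subgroup G) (n : ℤ),
    letI : Fintype S := Fintype.ofFinite S
    Subsingleton (tateH (σ.comp S.subtype) n)

end TateAux


section InfRes

variable {G : Type} [Group G] {A : Type} [AddCommGroup A]

/-- The fixed points `A^N` of a subgroup `N` acting on `A`. -/
def fixedSub (σ : G →* AddAut A) (N : Subgroup G) : AddSubgroup A where
  carrier := {a : A | ∀ n ∈ N, σ n a = a}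
  zero_mem' := fun n _ => map_zero (σ n)
  add_mem' := fun {a b} ha hb n hn => by rw [map_add, ha n hn, hb n hn]
  neg_mem' := fun {a} ha n hn => by rw [map_neg, ha n hn]

theorem smul_mem_fixedSub (σ : G →* AddAut A) (N : Subgroup G) [hN : N.Normal]
    (g : G) (a : A) (ha : a ∈ fixedSub σ N) : σ g a ∈ fixedSub σ N := by
  intro n hn
  have hm : g⁻¹ * n * g ∈ N := by
    have := hN.conj_mem n hn g⁻¹
    rwa [inv_inv] at this
  calc σ n (σ g a) = (σ n * σ g) a := rfl
    _ = σ (n * g) a := by rw [← map_mul]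
    _ = σ (g * (g⁻¹ * n * g)) a := by group
    _ = (σ g * σ (g⁻¹ * n * g)) a := by rw [← map_mul]
    _ = σ g (σ (g⁻¹ * n * g) a) := rfl
    _ = σ g a := by rw [ha _ hm]

/-- The action of `G/N` on the `N`-fixed points `A^N`, for `N` normal. -/
noncomputable def quotAut (σ : G →* AddAut A) (N : Subgroup G) [hN : N.Normal] :
    G ⧸ N →* AddAut (fixedSub σ N) :=
  QuotientGroup.lift N
    { toFun := fun g =>
        { toFun := fun a => ⟨σ g a, smul_mem_fixedSub σ N g a a.2⟩
          invFun := fun a => ⟨σ g⁻¹ a, smul_mem_fixedSub σ N g⁻¹ a a.2⟩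
          left_inv := fun a => Subtype.ext <| by
            show σ g⁻¹ (σ g ↑a) = ↑a
            calc σ g⁻¹ (σ g ↑a) = (σ g⁻¹ * σ g) ↑a := rfl
              _ = σ (g⁻¹ * g) ↑a := by rw [← map_mul]
              _ = ↑a := by rw [inv_mul_cancel, map_one]; rfl
          right_inv := fun a => Subtype.ext <| by
            show σ g (σ g⁻¹ ↑a) = ↑a
            calc σ g (σ g⁻¹ ↑a) = (σ g * σ g⁻¹) ↑a := rfl
              _ = σ (g * g⁻¹) ↑a := by rw [← map_mul]
              _ = ↑a := by rw [mul_inv_cancel, map_one]; rfl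
          map_add' := fun a b => Subtype.ext <| by
            show σ g (↑a + ↑b) = σ g ↑a + σ g ↑b
            rw [map_add] }
      map_one' := by
        ext a
        show σ 1 ↑a = ↑a
        rw [map_one]; rfl
      map_mul' := fun g h => by
        ext a
        show σ (g * h) ↑a = σ g (σ h ↑a)
        rw [map_mul]; rfl }
    (fun n hn => by
      ext a
      show σ n ↑a = ↑a
      exact a.2 n hn)

end InfRes

section InfRes

variable {G : Type} [Group G] {A : Type} [AddCommGroup A]

/-- The inflation map on inhomogeneous cochains, from cochains of `G/N` with
values in `A^N` to cochains of `G` with values in `A`. -/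
def inflMap (σ : G →* AddAut A) (N : Subgroup G) (m' : ℕ)
    (f : (Fin m' → G ⧸ N) → (fixedSub σ N)) : (Fin m' → G) → A :=
  fun g => ↑(f fun i => QuotientGroup.mk (g i))

/-- The restriction map on inhomogeneous cochains, from cochains of `G` to
cochains of a subgroup `N`. -/
def resMap (N : Subgroup G) (m' : ℕ) (f : (Fin m' → G) → A) : (Fin m' → ↥N) → A :=
  fun s => f fun i => ↑(s i)

end InfRes

/-! Dimension shifting. Embed `A` into the coinduced module `C = (G → A)`, `a ↦ (x ↦ x • a)`,
and put `B = C ⧸ A`. The cohomology of `C` vanishes over `G` and over `N`, and `C^N` is the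
`G/N`-module coinduced from `A`. Since `H^1(N, A) = 0`, also `0 → A^N → C^N → B^N → 0` is
exact, so the connecting maps identify `H^n(-, B)` with `H^{n+1}(-, A)` for `G/N` (on fixed
points), `G` and `N`, compatibly with inflation and restriction, and `B` satisfies the vanishing
hypothesis one degree lower. This reduces exactness to degree one, where it is checked on
explicit 1-cocycles. Restriction kills inflated classes because the restriction of an inflated
cochain is constant, and constant cocycles of positive degree are coboundaries. -/

namespace Fin

variable {α : Type*} (op : α → α → α) {n : ℕ}

theorem contractNth_zero_cons (a : α) (g : Fin (n + 1) → α) :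
    contractNth 0 op (cons a g) = cons (op a (g 0)) fun i => g i.succ := by
  funext i
  cases i using Fin.cases with
  | zero => rw [contractNth_apply_of_eq _ _ _ _ rfl]; rfl
  | succ i => rw [contractNth_apply_of_gt _ _ _ _ (by simp)]; rfl

theorem contractNth_succ_cons (j : Fin (n + 1)) (a : α) (g : Fin (n + 1) → α) :
    contractNth j.succ op (cons a g) = cons a (contractNth j op g) := by
  funext i
  cases i using Fin.cases with
  | zero => rw [contractNth_apply_of_lt _ _ _ _ (by simp)]; rfl
  | succ i =>
    simp only [cons_succ]
    rcases lt_trichotomy (i : ℕ) j with h | h | h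
    · rw [contractNth_apply_of_lt _ _ _ _ (by simpa), contractNth_apply_of_lt _ _ _ _ h]; rfl
    · rw [contractNth_apply_of_eq _ _ _ _ (by simpa), contractNth_apply_of_eq _ _ _ _ h]; rfl
    · rw [contractNth_apply_of_gt _ _ _ _ (by simpa), contractNth_apply_of_gt _ _ _ _ h]; rfl

end Fin

namespace TateAux

theorem exists_eq_const {α β : Type*} (e : (Fin 0 → α) → β) : ∃ b, e = fun _ => b :=
  ⟨e finZeroElim, funext fun _ => congrArg e (Subsingleton.elim _ _)⟩

theorem exists_eq_comp_apply_zero {α β : Type*} (f : (Fin 1 → α) → β) :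
    ∃ u : α → β, f = fun x => u (x 0) :=
  ⟨fun a => f fun _ => a,
    funext fun _ => congrArg f (funext fun i => by rw [Subsingleton.elim i 0])⟩

section Cochains

variable {K : Type} [Group K] {M M' : Type} [AddCommGroup M] [AddCommGroup M']

def IsEquivariant (τ : K →* AddAut M) (τ' : K →* AddAut M') (φ : M →+ M') : Prop :=
  ∀ k a, φ (τ k a) = τ' k (φ a)

/-- `H^{n+1}(K, M) = 0`, in cochain form. -/
def HVanishes (τ : K →* AddAut M) (n : ℕ) : Prop :=
  ∀ f, cochainD τ (n + 1) f = 0 → ∃ e, cochainD τ n e = f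

theorem cochainD_apply (τ : K →* AddAut M) (n : ℕ) (f : (Fin n → K) → M)
    (g : Fin (n + 1) → K) :
    cochainD τ n f g = τ (g 0) (f fun i => g i.succ) +
      ∑ j : Fin (n + 1), ((-1 : ℤ) ^ ((j : ℕ) + 1)) • f (Fin.contractNth j (· * ·) g) :=
  rfl

/-- `M` as an integral representation of `K`, whose inhomogeneous cochain differential is
`cochainD τ` on the nose. -/
noncomputable def toRep (τ : K →* AddAut M) : Rep ℤ K :=
  Rep.of (X := M)
    { toFun := fun k => (τ k).toAddMonoidHom.toIntLinearMap
      map_one' := by ext; simp; rfl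
      map_mul' := fun _ _ => by ext; simp; rfl }

theorem cochainD_cochainD (τ : K →* AddAut M) (n : ℕ) (f : (Fin n → K) → M) :
    cochainD τ (n + 1) (cochainD τ n f) = 0 := by
  have h := (groupCohomology.inhomogeneousCochains (toRep τ)).d_comp_d n (n + 1) (n + 2)
  rw [groupCohomology.inhomogeneousCochains.d_def,
    groupCohomology.inhomogeneousCochains.d_def] at h
  exact congrArg (fun φ => φ.hom f) h

theorem cochainD_comp_of_isEquivariant {τ : K →* AddAut M} {τ' : K →* AddAut M'}
    {φ : M →+ M'} (hφ : IsEquivariant τ τ' φ) (n : ℕ) (f : (Fin n → K) → M) :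
    cochainD τ' n (φ ∘ f) = φ ∘ cochainD τ n f := by
  funext g
  simp only [Function.comp_apply, cochainD_apply, map_add, map_sum, map_zsmul]
  rw [hφ]

theorem cochainD_comp_hom {K' : Type} [Group K'] (τ : K →* AddAut M) (ρ : K' →* K) (n : ℕ)
    (f : (Fin n → K) → M) :
    cochainD (τ.comp ρ) n (fun x => f (ρ ∘ x)) = fun x => cochainD τ n f (ρ ∘ x) := by
  funext g
  simp only [cochainD_apply, MonoidHom.comp_apply, Function.comp_apply,
    Fin.comp_contractNth (· * ·) (· * ·) (map_mul ρ)]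
  rfl

theorem cochainD_zero_const_apply (τ : K →* AddAut M) (a : M) (g : Fin 1 → K) :
    cochainD τ 0 (fun _ => a) g = τ (g 0) a - a := by
  simp [cochainD_apply, sub_eq_add_neg]

theorem cochainD_zero_const_eq_zero_iff (τ : K →* AddAut M) (a : M) :
    cochainD τ 0 (fun _ => a) = 0 ↔ ∀ k, τ k a = a := by
  refine ⟨fun h k => ?_, fun h => funext fun g => ?_⟩
  · simpa [cochainD_zero_const_apply, sub_eq_zero] using congrFun h fun _ => k
  · rw [cochainD_zero_const_apply, h, sub_self, Pi.zero_apply]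

theorem cochainD_one_apply (τ : K →* AddAut M) (u : K → M) (g : Fin 2 → K) :
    cochainD τ 1 (fun x => u (x 0)) g = τ (g 0) (u (g 1)) - u (g 0 * g 1) + u (g 0) := by
  simp [cochainD_apply, Fin.sum_univ_two, Fin.contractNth_apply_of_eq,
    Fin.contractNth_apply_of_lt]
  abel

theorem sum_neg_one_pow_succ (n : ℕ) :
    ∑ j : Fin (n + 1), (-1 : ℤ) ^ ((j : ℕ) + 1) = if Even n then -1 else 0 := by
  induction n with
  | zero => simp
  | succ n ih =>
    rw [Fin.sum_univ_castSucc]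
    simp only [Fin.val_castSucc, Fin.val_last, ih]
    rcases Nat.even_or_odd n with hn | hn <;> simp [hn, pow_succ, hn.neg_one_pow]

theorem cochainD_const (τ : K →* AddAut M) {c : M} (hc : ∀ k, τ k c = c) (n : ℕ) :
    cochainD τ n (fun _ => c) = fun _ => if Even n then 0 else c := by
  funext g
  rw [cochainD_apply, hc, ← Finset.sum_smul, sum_neg_one_pow_succ]
  split_ifs <;> simp

theorem exists_cochainD_eq_const (τ : K →* AddAut M) {c : M} (hc : ∀ k, τ k c = c) (n : ℕ)
    (h : cochainD τ (n + 1) (fun _ => c) = 0) : ∃ e, cochainD τ n e = fun _ => c := by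
  rcases Nat.even_or_odd n with hn | hn
  · have hc0 : c = 0 := by
      simpa [cochainD_const τ hc, Nat.even_add_one, hn] using congrFun h fun _ => 1
    exact ⟨0, by rw [map_zero, hc0]; rfl⟩
  · exact ⟨fun _ => c, by simp [cochainD_const τ hc, Nat.not_even_iff_odd.mpr hn]⟩

end Cochains

section Actions

variable {K : Type} [Group K] {M : Type} [AddCommGroup M] (τ : K →* AddAut M)

theorem map_mul_apply (k l : K) (a : M) : τ (k * l) a = τ k (τ l a) := by
  rw [map_mul]; rfl

theorem map_one_apply (a : M) : τ 1 a = a := by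
  rw [map_one]; rfl

theorem map_inv_apply_apply (k : K) (a : M) : τ k⁻¹ (τ k a) = a := by
  rw [← map_mul_apply, inv_mul_cancel, map_one_apply]

theorem map_apply_inv_apply (k : K) (a : M) : τ k (τ k⁻¹ a) = a := by
  simpa using map_inv_apply_apply τ k⁻¹ a

def quotientAut (S : AddSubgroup M) (hS : ∀ k, ∀ a ∈ S, τ k a ∈ S) : K →* AddAut (M ⧸ S) where
  toFun k :=
    { QuotientAddGroup.map S S (τ k).toAddMonoidHom (hS k) with
      invFun := QuotientAddGroup.map S S (τ k⁻¹).toAddMonoidHom (hS k⁻¹)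
      left_inv := fun x => QuotientAddGroup.induction_on x fun a =>
        congrArg QuotientAddGroup.mk (map_inv_apply_apply τ k a)
      right_inv := fun x => QuotientAddGroup.induction_on x fun a =>
        congrArg QuotientAddGroup.mk (map_apply_inv_apply τ k a) }
  map_one' := AddEquiv.ext fun x => QuotientAddGroup.induction_on x fun a =>
    congrArg QuotientAddGroup.mk (map_one_apply τ a)
  map_mul' k l := AddEquiv.ext fun x => QuotientAddGroup.induction_on x fun a =>
    congrArg QuotientAddGroup.mk (map_mul_apply τ k l a)

theorem IsEquivariant.map_mem_range {A C : Type} [AddCommGroup A] [AddCommGroup C]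
    {τA : K →* AddAut A} {τC : K →* AddAut C} {ι : A →+ C} (hι : IsEquivariant τA τC ι)
    (k : K) : ∀ c ∈ ι.range, τC k c ∈ ι.range := by
  rintro _ ⟨a, rfl⟩
  exact ⟨τA k a, hι k a⟩

end Actions

section Acyclic

variable {K : Type} [Group K] {M M' : Type} [AddCommGroup M] [AddCommGroup M']

theorem hVanishes_of_subsingleton (τ : K →* AddAut M) (n : ℕ)
    (h : Subsingleton ((cochainD τ (n + 1)).ker ⧸
      ((cochainD τ n).range.addSubgroupOf (cochainD τ (n + 1)).ker))) :
    HVanishes τ n := fun f hf =>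
  AddMonoidHom.mem_range.mp <| AddSubgroup.mem_addSubgroupOf.mp <|
    (QuotientAddGroup.eq_zero_iff (⟨f, hf⟩ : (cochainD τ (n + 1)).ker)).mp
      (Subsingleton.elim _ _)

theorem HVanishes.of_addEquiv {τ : K →* AddAut M} {τ' : K →* AddAut M'} (e : M ≃+ M')
    (he : IsEquivariant τ τ' e.toAddMonoidHom) {n : ℕ} (h : HVanishes τ n) :
    HVanishes τ' n := by
  have he' : IsEquivariant τ' τ e.symm.toAddMonoidHom := fun k b => e.injective <| by
    simpa using (he k (e.symm b)).symm
  intro f hf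
  obtain ⟨c, hc⟩ := h (e.symm.toAddMonoidHom ∘ f) <| by
    rw [cochainD_comp_of_isEquivariant he', hf]; funext; simp
  refine ⟨e.toAddMonoidHom ∘ c, ?_⟩
  rw [cochainD_comp_of_isEquivariant he, hc]
  funext; simp

/-- A module `X → M` coinduced from a free right action on `X` is acyclic. Here `T` picks a
point on each orbit and `x = T x • κ x`; a cocycle `F` is the coboundary of
`(k, x) ↦ F (κ x, k) (T x)`. -/
theorem hVanishes_of_free {X : Type} (act : X → K → X) (τ : K →* AddAut (X → M))
    (hτ : ∀ k f x, τ k f x = f (act x k)) (T : X → X) (κ : X → K)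
    (hT : ∀ x k, T (act x k) = T x) (hκ : ∀ x k, κ (act x k) = κ x * k)
    (hsec : ∀ x, act (T x) (κ x) = x) (n : ℕ) : HVanishes τ n := by
  have hd : ∀ m (F : (Fin m → K) → X → M) g x, cochainD τ m F g x =
      F (fun i => g i.succ) (act x (g 0)) +
        ∑ j : Fin (m + 1), ((-1 : ℤ) ^ ((j : ℕ) + 1)) • F (Fin.contractNth j (· * ·) g) x := by
    intro m F g x
    simp [cochainD_apply, hτ]
  intro F hF
  refine ⟨fun k x => F (Fin.cons (κ x) k) (T x), funext fun g => funext fun x => ?_⟩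
  have hsign : ∀ k : ℕ, (-1 : ℤ) ^ (k + 1 + 1) = -(-1) ^ (k + 1) := fun k => by ring
  have h0 := congrFun (congrFun hF (Fin.cons (κ x) g)) (T x)
  rw [hd, Fin.sum_univ_succ, Fin.contractNth_zero_cons] at h0
  simp only [Fin.cons_succ, Fin.cons_zero, hsec, Fin.contractNth_succ_cons, Fin.val_succ, hsign,
    neg_smul, Finset.sum_neg_distrib, Fin.val_zero, zero_add, pow_one, one_smul,
    Pi.zero_apply] at h0
  change F g x + _ = 0 at h0
  rw [hd]
  simp only [hκ, hT]
  refine eq_of_sub_eq_zero (neg_eq_zero.mp ?_)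
  rw [← h0]
  abel

end Acyclic

section InflationRestriction

variable {G : Type} [Group G] {A A' : Type} [AddCommGroup A] [AddCommGroup A']

def fixedMap {σ : G →* AddAut A} {σ' : G →* AddAut A'} (N : Subgroup G) {φ : A →+ A'}
    (hφ : IsEquivariant σ σ' φ) : fixedSub σ N →+ fixedSub σ' N :=
  (φ.comp (fixedSub σ N).subtype).codRestrict _ fun a n hn => by
    show σ' n (φ a) = φ a
    rw [← hφ, a.2 n hn]

theorem isEquivariant_fixedMap {σ : G →* AddAut A} {σ' : G →* AddAut A'} (N : Subgroup G)
    [N.Normal] {φ : A →+ A'} (hφ : IsEquivariant σ σ' φ) :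
    IsEquivariant (quotAut σ N) (quotAut σ' N) (fixedMap N hφ) := by
  intro q a
  induction q using QuotientGroup.induction_on with
  | H g => exact Subtype.ext (hφ g a)

theorem mem_fixedSub_iff_cochainD (τ : G →* AddAut A) (N : Subgroup G) (a : A) :
    a ∈ fixedSub τ N ↔ cochainD (τ.comp N.subtype) 0 (fun _ => a) = 0 := by
  rw [cochainD_zero_const_eq_zero_iff]
  exact ⟨fun h n => h n n.2, fun h n hn => h ⟨n, hn⟩⟩

theorem inflMap_injective (σ : G →* AddAut A) (N : Subgroup G) (m : ℕ) :
    Function.Injective (inflMap σ N m) := by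
  intro f₁ f₂ h
  funext x
  obtain ⟨g, rfl⟩ := QuotientGroup.mk_surjective.comp_left x
  exact Subtype.ext (congrFun h g)

theorem inflMap_cochainD (σ : G →* AddAut A) (N : Subgroup G) [N.Normal] (m : ℕ)
    (f : (Fin m → G ⧸ N) → fixedSub σ N) :
    cochainD σ m (inflMap σ N m f) = inflMap σ N (m + 1) (cochainD (quotAut σ N) m f) := by
  have h := cochainD_comp_of_isEquivariant (τ := (quotAut σ N).comp (QuotientGroup.mk' N))
    (φ := (fixedSub σ N).subtype) (fun _ _ => rfl) m (fun x => f (QuotientGroup.mk' N ∘ x))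
  rw [cochainD_comp_hom] at h
  exact h

theorem resMap_cochainD (σ : G →* AddAut A) (N : Subgroup G) (m : ℕ) (f : (Fin m → G) → A) :
    cochainD (σ.comp N.subtype) m (resMap N m f) = resMap N (m + 1) (cochainD σ m f) :=
  cochainD_comp_hom σ N.subtype m f

/-- Injectivity of inflation `H^{m+1}(G/N, A^N) → H^{m+1}(G, A)`. -/
def InflInjective (σ : G →* AddAut A) (N : Subgroup G) [N.Normal] (m : ℕ) : Prop :=
  ∀ f, cochainD (quotAut σ N) (m + 1) f = 0 →
    (∃ e, cochainD σ m e = inflMap σ N (m + 1) f) → ∃ e, cochainD (quotAut σ N) m e = f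

/-- Classes of `H^{m+1}(G, A)` killed by restriction to `N` are inflated from `G/N`. -/
def KerResLeRangeInfl (σ : G →* AddAut A) (N : Subgroup G) [N.Normal] (m : ℕ) : Prop :=
  ∀ f, cochainD σ (m + 1) f = 0 →
    (∃ e, cochainD (σ.comp N.subtype) m e = resMap N (m + 1) f) →
    ∃ f', cochainD (quotAut σ N) (m + 1) f' = 0 ∧
      ∃ e, cochainD σ m e = inflMap σ N (m + 1) f' - f

variable (σ : G →* AddAut A) (N : Subgroup G) [hN : N.Normal]

theorem inflInjective_zero : InflInjective σ N 0 := by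
  rintro f - ⟨e, he⟩
  obtain ⟨a, rfl⟩ := exists_eq_const e
  have hf : ∀ g : G, σ g a - a = f fun _ => (g : G ⧸ N) := fun g =>
    (cochainD_zero_const_apply σ a _).symm.trans (congrFun he fun _ => g)
  have ha : a ∈ fixedSub σ N := fun n hn => by
    have h1 := hf 1
    rw [map_one_apply, sub_self, QuotientGroup.mk_one] at h1
    rw [← sub_eq_zero, hf n, (QuotientGroup.eq_one_iff n).mpr hn, ← h1]
  refine ⟨fun _ => ⟨a, ha⟩, inflMap_injective σ N 1 ?_⟩
  rw [← inflMap_cochainD, ← he]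
  rfl

theorem exists_inflMap_eq_of_eq_zero_on {u : G → A} (hu : cochainD σ 1 (fun x => u (x 0)) = 0)
    (hres : ∀ n ∈ N, u n = 0) : ∃ f, inflMap σ N 1 f = fun x => u (x 0) := by
  have hcoc : ∀ x y, u (x * y) = σ x (u y) + u x := fun x y => by
    have h := congrFun hu ![x, y]
    rw [cochainD_one_apply] at h
    simp only [Matrix.cons_val_zero, Matrix.cons_val_one, Pi.zero_apply] at h
    rw [← sub_eq_zero, ← neg_eq_zero, ← h]
    abel
  have hright : ∀ g, ∀ n ∈ N, u (g * n) = u g := fun g n hn => by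
    rw [hcoc, hres n hn, map_zero, zero_add]
  have hfix : ∀ g, u g ∈ fixedSub σ N := fun g n hn => by
    have h := hcoc n g
    rw [hres n hn, add_zero, show n * g = g * (g⁻¹ * n * g) by group,
      hright g _ (hN.conj_mem' n hn g)] at h
    exact h.symm
  refine ⟨fun q => ⟨u (q 0).out, hfix _⟩, funext fun x => ?_⟩
  obtain ⟨h, hh⟩ := QuotientGroup.mk_out_eq_mul N (x 0)
  change u (x 0 : G ⧸ N).out = u (x 0)
  rw [hh, hright _ _ h.2]

theorem kerResLeRangeInfl_zero : KerResLeRangeInfl σ N 0 := by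
  rintro f hf ⟨e, he⟩
  obtain ⟨a, rfl⟩ := exists_eq_const e
  obtain ⟨u, rfl⟩ := exists_eq_comp_apply_zero f
  -- correct `f` by the coboundary of `a` so that it vanishes on `N`
  set w : G → A := fun g => u g - (σ g a - a) with hw
  have hwf : (fun x => w (x 0)) = (fun x => u (x 0)) - cochainD σ 0 (fun _ => a) :=
    funext fun x => by simp [hw, cochainD_zero_const_apply]
  have hwres : ∀ n ∈ N, w n = 0 := fun n hn => by
    have h : σ n a - a = u n :=
      (cochainD_zero_const_apply _ a _).symm.trans (congrFun he fun _ => ⟨n, hn⟩)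
    change u n - (σ n a - a) = 0
    rw [h, sub_self]
  obtain ⟨f', hf'⟩ := exists_inflMap_eq_of_eq_zero_on σ N (by
    rw [hwf, map_sub, hf, cochainD_cochainD, sub_zero]) hwres
  refine ⟨f', inflMap_injective σ N 2 ?_, fun _ => -a, ?_⟩
  · rw [← inflMap_cochainD, hf', hwf, map_sub, hf, cochainD_cochainD, sub_zero]
    rfl
  · rw [hf', hwf]
    funext x
    simp [cochainD_zero_const_apply, neg_add_eq_sub]

theorem exists_cochainD_eq_resMap_inflMap (m : ℕ) {f : (Fin (m + 1) → G ⧸ N) → fixedSub σ N}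
    (hf : cochainD (quotAut σ N) (m + 1) f = 0) :
    ∃ e, cochainD (σ.comp N.subtype) m e = resMap N (m + 1) (inflMap σ N (m + 1) f) := by
  have hconst : resMap N (m + 1) (inflMap σ N (m + 1) f) = fun _ => (f 1 : A) :=
    funext fun s => congrArg (fun x => (f x : A))
      (funext fun i => (QuotientGroup.eq_one_iff _).mpr (s i).2)
  rw [hconst]
  refine exists_cochainD_eq_const (σ.comp N.subtype) (fun n => (f 1).2 n n.2) m ?_
  rw [← hconst, resMap_cochainD, inflMap_cochainD, hf]
  rfl

end InflationRestriction

section ShortExact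

variable {K : Type} [Group K] {A C B : Type} [AddCommGroup A] [AddCommGroup C] [AddCommGroup B]

structure ShortExact (τA : K →* AddAut A) (τC : K →* AddAut C) (τB : K →* AddAut B) where
  ι : A →+ C
  π : C →+ B
  isEquivariant_ι : IsEquivariant τA τC ι
  isEquivariant_π : IsEquivariant τC τB π
  injective_ι : Function.Injective ι
  surjective_π : Function.Surjective π
  exact : Function.Exact ι π

namespace ShortExact

variable {τA : K →* AddAut A} {τC : K →* AddAut C} {τB : K →* AddAut B}
  (S : ShortExact τA τC τB) {n : ℕ}

def comp {K' : Type} [Group K'] (ρ : K' →* K) :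
    ShortExact (τA.comp ρ) (τC.comp ρ) (τB.comp ρ) where
  ι := S.ι
  π := S.π
  isEquivariant_ι k := S.isEquivariant_ι (ρ k)
  isEquivariant_π k := S.isEquivariant_π (ρ k)
  injective_ι := S.injective_ι
  surjective_π := S.surjective_π
  exact := S.exact

theorem π_comp_ι_comp {α : Type} (f : α → A) : S.π ∘ S.ι ∘ f = 0 :=
  funext fun x => S.exact.apply_apply_eq_zero (f x)

theorem ι_comp_injective {α : Type} {f g : α → A} (h : S.ι ∘ f = S.ι ∘ g) : f = g :=
  S.injective_ι.comp_left h

theorem exists_π_comp_eq {α : Type} (Y : α → B) : ∃ X, S.π ∘ X = Y :=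
  S.surjective_π.comp_left Y

theorem exists_ι_comp_eq {α : Type} {X : α → C} (h : S.π ∘ X = 0) : ∃ f, S.ι ∘ f = X := by
  choose f hf using fun x => (S.exact (X x)).mp (congrFun h x)
  exact ⟨f, funext hf⟩

/-! The connecting map `H^n(K, B) → H^{n+1}(K, A)` sends the class of `π ∘ X` to that of `f`
where `d X = ι ∘ f`. The next lemmas show that it is well defined, and bijective when `C` is
acyclic. -/

theorem exists_cochainD_eq_ι_comp (hC : HVanishes τC n) {f : (Fin (n + 1) → K) → A}
    (hf : cochainD τA (n + 1) f = 0) : ∃ X, cochainD τC n X = S.ι ∘ f :=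
  hC _ <| by rw [cochainD_comp_of_isEquivariant S.isEquivariant_ι, hf]; funext; simp

theorem cochainD_π_comp_eq_zero {X : (Fin n → K) → C} {f : (Fin (n + 1) → K) → A}
    (hX : cochainD τC n X = S.ι ∘ f) : cochainD τB n (S.π ∘ X) = 0 := by
  rw [cochainD_comp_of_isEquivariant S.isEquivariant_π, hX, S.π_comp_ι_comp]

theorem exists_cocycle_of_cochainD_π_comp_eq_zero {X : (Fin n → K) → C}
    (h : cochainD τB n (S.π ∘ X) = 0) :
    ∃ f, cochainD τA (n + 1) f = 0 ∧ cochainD τC n X = S.ι ∘ f := by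
  rw [cochainD_comp_of_isEquivariant S.isEquivariant_π] at h
  obtain ⟨f, hf⟩ := S.exists_ι_comp_eq h
  refine ⟨f, S.ι_comp_injective ?_, hf.symm⟩
  rw [← cochainD_comp_of_isEquivariant S.isEquivariant_ι, hf, cochainD_cochainD]
  funext; simp

theorem exists_cochainD_eq_of_cochainD_eq_ι_comp {X : (Fin (n + 1) → K) → C}
    {f : (Fin (n + 2) → K) → A} (hX : cochainD τC (n + 1) X = S.ι ∘ f)
    (hπX : ∃ Y, cochainD τB n Y = S.π ∘ X) : ∃ e, cochainD τA (n + 1) e = f := by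
  obtain ⟨Y, hY⟩ := hπX
  obtain ⟨Y, rfl⟩ := S.exists_π_comp_eq Y
  obtain ⟨e, he⟩ : ∃ e, S.ι ∘ e = X - cochainD τC n Y := S.exists_ι_comp_eq <| by
    rw [cochainD_comp_of_isEquivariant S.isEquivariant_π] at hY
    funext x
    have hx : S.π (cochainD τC n Y x) = S.π (X x) := congrFun hY x
    simp [hx]
  refine ⟨e, S.ι_comp_injective ?_⟩
  rw [← cochainD_comp_of_isEquivariant S.isEquivariant_ι, he, map_sub, cochainD_cochainD, hX,
    sub_zero]

theorem exists_cochainD_eq_π_comp (hC : HVanishes τC n) {X : (Fin (n + 1) → K) → C}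
    {e : (Fin (n + 1) → K) → A} (hX : cochainD τC (n + 1) X = S.ι ∘ cochainD τA (n + 1) e) :
    ∃ W, cochainD τB n W = S.π ∘ X := by
  obtain ⟨W, hW⟩ := hC (X - S.ι ∘ e) <| by
    rw [map_sub, hX, cochainD_comp_of_isEquivariant S.isEquivariant_ι, sub_self]
  refine ⟨S.π ∘ W, ?_⟩
  rw [cochainD_comp_of_isEquivariant S.isEquivariant_π, hW]
  funext x
  simp [S.exact.apply_apply_eq_zero]

theorem hVanishes (S : ShortExact τA τC τB) (hA : HVanishes τA (n + 1)) (hC : HVanishes τC n) :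
    HVanishes τB n := by
  intro b hb
  obtain ⟨X, rfl⟩ := S.exists_π_comp_eq b
  obtain ⟨f, hf, hX⟩ := S.exists_cocycle_of_cochainD_π_comp_eq_zero hb
  obtain ⟨e, rfl⟩ := hA f hf
  exact S.exists_cochainD_eq_π_comp hC hX

theorem hVanishes_of_lt (S : ShortExact τA τC τB) (hC : ∀ j, HVanishes τC j) {m : ℕ}
    (hA : ∀ j < m + 1, HVanishes τA j) : ∀ j < m, HVanishes τB j :=
  fun j hj => S.hVanishes (hA (j + 1) (by omega)) (hC j)

variable {ι : A →+ C}

def ofInjective (hι : IsEquivariant τA τC ι) (hinj : Function.Injective ι) :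
    ShortExact τA τC (quotientAut τC ι.range hι.map_mem_range) where
  ι := ι
  π := QuotientAddGroup.mk' _
  isEquivariant_ι := hι
  isEquivariant_π _ _ := rfl
  injective_ι := hinj
  surjective_π := QuotientAddGroup.mk'_surjective _
  exact c := QuotientAddGroup.eq_zero_iff c

end ShortExact

end ShortExact

namespace ShortExact

variable {G : Type} [Group G] {A C B : Type} [AddCommGroup A] [AddCommGroup C] [AddCommGroup B]
  {τA : G →* AddAut A} {τC : G →* AddAut C} {τB : G →* AddAut B} (N : Subgroup G) {m : ℕ}

/-- The piece `C^N → B^N → H^1(N, A)` of the long exact sequence. -/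
theorem fixedMap_π_surjective (S : ShortExact τA τC τB) (h1 : HVanishes (τA.comp N.subtype) 0) :
    Function.Surjective (fixedMap N S.isEquivariant_π) := by
  rintro ⟨b, hb⟩
  obtain ⟨c, rfl⟩ := S.surjective_π b
  obtain ⟨f, hf, hcf⟩ := (S.comp N.subtype).exists_cocycle_of_cochainD_π_comp_eq_zero
    (X := fun _ => c) ((mem_fixedSub_iff_cochainD _ N _).mp hb)
  obtain ⟨e, rfl⟩ := h1 f hf
  obtain ⟨a, rfl⟩ := exists_eq_const e
  refine ⟨⟨c - S.ι a, (mem_fixedSub_iff_cochainD _ N _).mpr ?_⟩, Subtype.ext ?_⟩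
  · change cochainD _ 0 ((fun _ => c) - (S.comp N.subtype).ι ∘ fun _ => a) = 0
    rw [map_sub, hcf, cochainD_comp_of_isEquivariant (S.comp N.subtype).isEquivariant_ι]
    exact sub_self _
  · change S.π (c - S.ι a) = S.π c
    rw [map_sub, S.exact.apply_apply_eq_zero, sub_zero]

def fixed (S : ShortExact τA τC τB) [N.Normal] (h1 : HVanishes (τA.comp N.subtype) 0) :
    ShortExact (quotAut τA N) (quotAut τC N) (quotAut τB N) where
  ι := fixedMap N S.isEquivariant_ι
  π := fixedMap N S.isEquivariant_π
  isEquivariant_ι := isEquivariant_fixedMap N S.isEquivariant_ι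
  isEquivariant_π := isEquivariant_fixedMap N S.isEquivariant_π
  injective_ι _ _ h := Subtype.ext (S.injective_ι (congrArg Subtype.val h))
  surjective_π := S.fixedMap_π_surjective N h1
  exact c := by
    refine ⟨fun h => ?_, ?_⟩
    · obtain ⟨a, ha⟩ := (S.exact c).mp (congrArg Subtype.val h)
      refine ⟨⟨a, fun n hn => S.injective_ι ?_⟩, Subtype.ext ha⟩
      rw [S.isEquivariant_ι, ha, c.2 n hn]
    · rintro ⟨a, rfl⟩
      exact Subtype.ext (S.exact.apply_apply_eq_zero a)

theorem inflInjective_succ (S : ShortExact τA τC τB) [N.Normal] (hC : HVanishes τC m)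
    (hCN : HVanishes (quotAut τC N) (m + 1)) (h1 : HVanishes (τA.comp N.subtype) 0)
    (ih : InflInjective τB N m) : InflInjective τA N (m + 1) := by
  rintro f hf ⟨e, he⟩
  let SN := S.fixed N h1
  obtain ⟨X, hX⟩ := SN.exists_cochainD_eq_ι_comp hCN hf
  have hXinfl :
      cochainD τC (m + 1) (inflMap τC N (m + 1) X) = S.ι ∘ cochainD τA (m + 1) e := by
    rw [inflMap_cochainD, hX, he]
    rfl
  obtain ⟨Y, hY⟩ := ih (SN.π ∘ X) (SN.cochainD_π_comp_eq_zero hX)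
    (S.exists_cochainD_eq_π_comp hC hXinfl)
  exact SN.exists_cochainD_eq_of_cochainD_eq_ι_comp hX ⟨Y, hY⟩

theorem kerResLeRangeInfl_succ (S : ShortExact τA τC τB) [N.Normal] (hC : HVanishes τC (m + 1))
    (hCN : HVanishes (τC.comp N.subtype) m) (h1 : HVanishes (τA.comp N.subtype) 0)
    (ih : KerResLeRangeInfl τB N m) : KerResLeRangeInfl τA N (m + 1) := by
  rintro f hf ⟨e, he⟩
  let SN := S.fixed N h1
  obtain ⟨X, hX⟩ := S.exists_cochainD_eq_ι_comp hC hf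
  have hXres : cochainD (τC.comp N.subtype) (m + 1) (resMap N (m + 1) X) =
      S.ι ∘ cochainD (τA.comp N.subtype) (m + 1) e := by
    rw [resMap_cochainD, hX, he]
    rfl
  obtain ⟨b, hb, Y, hY⟩ := ih (S.π ∘ X) (S.cochainD_π_comp_eq_zero hX)
    ((S.comp N.subtype).exists_cochainD_eq_π_comp hCN hXres)
  obtain ⟨Z, rfl⟩ := SN.exists_π_comp_eq b
  obtain ⟨f', hf', hZ⟩ := SN.exists_cocycle_of_cochainD_π_comp_eq_zero hb
  refine ⟨f', hf', S.exists_cochainD_eq_of_cochainD_eq_ι_comp (X := inflMap τC N (m + 1) Z - X)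
    ?_ ⟨Y, hY.trans (funext fun _ => (map_sub S.π _ _).symm)⟩⟩
  rw [map_sub, inflMap_cochainD, hZ, hX]
  funext x
  exact (map_sub S.ι _ _).symm

end ShortExact

section Coinduced

variable {G : Type} [Group G] {A : Type} [AddCommGroup A]

def coindAut (G A : Type) [Group G] [AddCommGroup A] : G →* AddAut (G → A) where
  toFun g :=
    { toFun := fun f x => f (x * g)
      invFun := fun f x => f (x * g⁻¹)
      left_inv := fun f => funext fun x => by simp
      right_inv := fun f => funext fun x => by simp
      map_add' := fun _ _ => rfl }
  map_one' := AddEquiv.ext fun f => funext fun x => by simp; rfl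
  map_mul' g h := AddEquiv.ext fun f => funext fun x => by
    change f (x * (g * h)) = f (x * g * h)
    rw [mul_assoc]

def coindEmbedding (σ : G →* AddAut A) : A →+ (G → A) where
  toFun a x := σ x a
  map_zero' := funext fun _ => map_zero _
  map_add' _ _ := funext fun _ => map_add _ _ _

theorem isEquivariant_coindEmbedding (σ : G →* AddAut A) :
    IsEquivariant σ (coindAut G A) (coindEmbedding σ) :=
  fun g a => funext fun x => (map_mul_apply σ x g a).symm

theorem coindEmbedding_injective (σ : G →* AddAut A) : Function.Injective (coindEmbedding σ) :=
  fun a b h => by simpa [coindEmbedding] using congrFun h 1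

noncomputable def coindShortExact (σ : G →* AddAut A) :
    ShortExact σ (coindAut G A)
      (quotientAut (coindAut G A) (coindEmbedding σ).range
        (isEquivariant_coindEmbedding σ).map_mem_range) :=
  ShortExact.ofInjective (isEquivariant_coindEmbedding σ) (coindEmbedding_injective σ)

theorem hVanishes_coindAut (n : ℕ) : HVanishes (coindAut G A) n :=
  hVanishes_of_free (fun x g => x * g) _ (fun _ _ _ => rfl) (fun _ => 1) id (fun _ _ => rfl)
    (fun _ _ => rfl) one_mul n

theorem out_inv_mul_mem (H : Subgroup G) (x : G) : (x : G ⧸ H).out⁻¹ * x ∈ H :=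
  QuotientGroup.eq.mp (QuotientGroup.out_eq' _)

theorem hVanishes_coindAut_comp_subtype (H : Subgroup G) (n : ℕ) :
    HVanishes ((coindAut G A).comp H.subtype) n := by
  refine hVanishes_of_free (fun (x : G) (h : H) => x * h) _ (fun _ _ _ => rfl)
    (fun x => (x : G ⧸ H).out) (fun x => ⟨_, out_inv_mul_mem H x⟩) (fun x h => ?_)
    (fun x h => Subtype.ext ?_) (fun x => mul_inv_cancel_left _ x) n
  · rw [QuotientGroup.mk_mul_of_mem x h.2]
  · change (↑(x * h) : G ⧸ H).out⁻¹ * (x * h) = (x : G ⧸ H).out⁻¹ * x * h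
    rw [QuotientGroup.mk_mul_of_mem x h.2, mul_assoc]

noncomputable def coindFixedEquiv (N : Subgroup G) :
    ((G ⧸ N) → A) ≃+ fixedSub (coindAut G A) N where
  toFun F := ⟨fun x => F x, fun n hn => funext fun x =>
    congrArg F (QuotientGroup.mk_mul_of_mem x hn)⟩
  invFun c q := (c : G → A) q.out
  left_inv F := funext fun q => congrArg F (QuotientGroup.out_eq' q)
  right_inv c := by
    refine Subtype.ext (funext fun x => ?_)
    have hmem : x⁻¹ * (x : G ⧸ N).out ∈ N := by simpa using inv_mem (out_inv_mul_mem N x)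
    have h : (c : G → A) (x * (x⁻¹ * (x : G ⧸ N).out)) = (c : G → A) x :=
      congrFun (c.2 _ hmem) x
    rwa [mul_inv_cancel_left] at h
  map_add' _ _ := rfl

theorem isEquivariant_coindFixedEquiv (N : Subgroup G) [N.Normal] :
    IsEquivariant (coindAut (G ⧸ N) A) (quotAut (coindAut G A) N)
      (coindFixedEquiv N).toAddMonoidHom := by
  intro q F
  induction q using QuotientGroup.induction_on with
  | H g => rfl

theorem hVanishes_quotAut_coindAut (N : Subgroup G) [N.Normal] (n : ℕ) :
    HVanishes (quotAut (coindAut G A) N) n :=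
  (hVanishes_coindAut n).of_addEquiv _ (isEquivariant_coindFixedEquiv N)

end Coinduced

section DimensionShifting

variable {G : Type} [Group G] (N : Subgroup G) [N.Normal]

theorem inflInjective_of_hVanishes (m : ℕ) {A : Type} [AddCommGroup A] (σ : G →* AddAut A)
    (hσ : ∀ j < m, HVanishes (σ.comp N.subtype) j) : InflInjective σ N m := by
  induction m generalizing A with
  | zero => exact inflInjective_zero σ N
  | succ m ih =>
    let S := coindShortExact σ
    exact S.inflInjective_succ N (hVanishes_coindAut m) (hVanishes_quotAut_coindAut N (m + 1))
      (hσ 0 m.succ_pos) (ih _ ((S.comp N.subtype).hVanishes_of_lt (hVanishes_coindAut_comp_subtype N) hσ))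

theorem kerResLeRangeInfl_of_hVanishes (m : ℕ) {A : Type} [AddCommGroup A]
    (σ : G →* AddAut A) (hσ : ∀ j < m, HVanishes (σ.comp N.subtype) j) :
    KerResLeRangeInfl σ N m := by
  induction m generalizing A with
  | zero => exact kerResLeRangeInfl_zero σ N
  | succ m ih =>
    let S := coindShortExact σ
    exact S.kerResLeRangeInfl_succ N (hVanishes_coindAut (m + 1))
      (hVanishes_coindAut_comp_subtype N m) (hσ 0 m.succ_pos)
      (ih _ ((S.comp N.subtype).hVanishes_of_lt (hVanishes_coindAut_comp_subtype N) hσ))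

end DimensionShifting

end TateAux

theorem inflation_restriction_exact_general
    (G : Type) [Group G]
    (A : Type) [AddCommGroup A] (σ : G →* AddAut A)
    (N : Subgroup G) [N.Normal] (m : ℕ)
    (hvanish : ∀ j : ℕ, j + 1 < m + 1 →
      Subsingleton ((AddMonoidHom.ker (TateAux.cochainD (σ.comp N.subtype) (j + 1))) ⧸
        ((AddMonoidHom.range (TateAux.cochainD (σ.comp N.subtype) j)).addSubgroupOf
          (AddMonoidHom.ker (TateAux.cochainD (σ.comp N.subtype) (j + 1)))))) :
    -- inflation sends cocycles to cocycles and coboundaries to coboundaries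
    (∀ f, TateAux.cochainD (quotAut σ N) (m + 1) f = 0 →
        TateAux.cochainD σ (m + 1) (inflMap σ N (m + 1) f) = 0) ∧
    (∀ f e, TateAux.cochainD (quotAut σ N) m e = f →
        ∃ e', TateAux.cochainD σ m e' = inflMap σ N (m + 1) f) ∧
    -- restriction sends cocycles to cocycles and coboundaries to coboundaries
    (∀ f, TateAux.cochainD σ (m + 1) f = 0 →
        TateAux.cochainD (σ.comp N.subtype) (m + 1) (resMap N (m + 1) f) = 0) ∧
    (∀ f e, TateAux.cochainD σ m e = f →
        ∃ e', TateAux.cochainD (σ.comp N.subtype) m e' = resMap N (m + 1) f) ∧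
    -- exactness at `H^n(G/N, A^N)`: inflation is injective on cohomology
    (∀ f, TateAux.cochainD (quotAut σ N) (m + 1) f = 0 →
      (∃ e, TateAux.cochainD σ m e = inflMap σ N (m + 1) f) →
      ∃ e, TateAux.cochainD (quotAut σ N) m e = f) ∧
    -- exactness at `H^n(G, A)`: image of inflation ⊆ kernel of restriction …
    (∀ f, TateAux.cochainD (quotAut σ N) (m + 1) f = 0 →
      ∃ e, TateAux.cochainD (σ.comp N.subtype) m e = resMap N (m + 1) (inflMap σ N (m + 1) f)) ∧
    -- … and kernel of restriction ⊆ image of inflation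
    (∀ f, TateAux.cochainD σ (m + 1) f = 0 →
      (∃ e, TateAux.cochainD (σ.comp N.subtype) m e = resMap N (m + 1) f) →
      ∃ f', TateAux.cochainD (quotAut σ N) (m + 1) f' = 0 ∧
        ∃ e, TateAux.cochainD σ m e = inflMap σ N (m + 1) f' - f) := by
  have hN : ∀ j < m, TateAux.HVanishes (σ.comp N.subtype) j := fun j hj =>
    TateAux.hVanishes_of_subsingleton _ j (hvanish j (by omega))
  refine ⟨fun f hf => ?_, fun f e he => ⟨inflMap σ N m e, ?_⟩, fun f hf => ?_,
    fun f e he => ⟨resMap N m e, ?_⟩, TateAux.inflInjective_of_hVanishes N m σ hN,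
    fun f hf => TateAux.exists_cochainD_eq_resMap_inflMap σ N m hf,
    TateAux.kerResLeRangeInfl_of_hVanishes N m σ hN⟩
  · rw [TateAux.inflMap_cochainD, hf]
    rfl
  · rw [TateAux.inflMap_cochainD, he]
  · rw [TateAux.resMap_cochainD, hf]
    rfl
  · rw [TateAux.resMap_cochainD, he]

/-- **The inflation-restriction exact sequence in degree `n = m+1`.**
Let `G` be a finite group, `A` a `G`-module and `N ⊴ G` a normal subgroup with
`H^i(N, A) = 0` for `i = 1, …, n-1`.  Then the sequence
`0 → H^n(G/N, A^N) → H^n(G, A) → H^n(N, A)`, with maps induced by inflation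
and restriction, is exact.  This is expressed at the level of inhomogeneous
cochains: inflation and restriction preserve cocycles and coboundaries,
inflation is injective on cohomology, the composite of restriction and
inflation vanishes on cohomology, and every class killed by restriction is an
inflated class. -/
theorem inflation_restriction_exact
    (G : Type) [Group G] [Fintype G]
    (A : Type) [AddCommGroup A] (σ : G →* AddAut A)
    (N : Subgroup G) [N.Normal] (m : ℕ)
    (hvanish : ∀ j : ℕ, j + 1 < m + 1 →
      Subsingleton ((AddMonoidHom.ker (TateAux.cochainD (σ.comp N.subtype) (j + 1))) ⧸
        ((AddMonoidHom.range (TateAux.cochainD (σ.comp N.subtype) j)).addSubgroupOf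
          (AddMonoidHom.ker (TateAux.cochainD (σ.comp N.subtype) (j + 1)))))) :
    -- inflation sends cocycles to cocycles and coboundaries to coboundaries
    (∀ f, TateAux.cochainD (quotAut σ N) (m + 1) f = 0 →
        TateAux.cochainD σ (m + 1) (inflMap σ N (m + 1) f) = 0) ∧
    (∀ f e, TateAux.cochainD (quotAut σ N) m e = f →
        ∃ e', TateAux.cochainD σ m e' = inflMap σ N (m + 1) f) ∧
    -- restriction sends cocycles to cocycles and coboundaries to coboundaries
    (∀ f, TateAux.cochainD σ (m + 1) f = 0 →
        TateAux.cochainD (σ.comp N.subtype) (m + 1) (resMap N (m + 1) f) = 0) ∧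
    (∀ f e, TateAux.cochainD σ m e = f →
        ∃ e', TateAux.cochainD (σ.comp N.subtype) m e' = resMap N (m + 1) f) ∧
    -- exactness at `H^n(G/N, A^N)`: inflation is injective on cohomology
    (∀ f, TateAux.cochainD (quotAut σ N) (m + 1) f = 0 →
      (∃ e, TateAux.cochainD σ m e = inflMap σ N (m + 1) f) →
      ∃ e, TateAux.cochainD (quotAut σ N) m e = f) ∧
    -- exactness at `H^n(G, A)`: image of inflation ⊆ kernel of restriction …
    (∀ f, TateAux.cochainD (quotAut σ N) (m + 1) f = 0 →
      ∃ e, TateAux.cochainD (σ.comp N.subtype) m e = resMap N (m + 1) (inflMap σ N (m + 1) f)) ∧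
    -- … and kernel of restriction ⊆ image of inflation
    (∀ f, TateAux.cochainD σ (m + 1) f = 0 →
      (∃ e, TateAux.cochainD (σ.comp N.subtype) m e = resMap N (m + 1) f) →
      ∃ f', TateAux.cochainD (quotAut σ N) (m + 1) f' = 0 ∧
        ∃ e, TateAux.cochainD σ m e = inflMap σ N (m + 1) f' - f) :=
  inflation_restriction_exact_general G A σ N m hvanish
end

section
/- Let k be a field of characteristic p, G a cyclic group of order p, and V a finite-dimensional kG-module. If Hom_k(V,V), with the G-action (g·f)(v) = g·f(g^{-1}·v), is a free kG-module, then V is a free kG-module. -/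
/-!
Over a field of characteristic `p` the group algebra `k[G]` of a commutative `p`-group is local:
Frobenius sends `x` to `ε(x) ^ p ^ n`, so the augmentation ideal `ker ε` is nil. Every `G`-fixed
vector of a projective `k[G]`-module is a norm `∑ g, g • w`, as is visibly the case in a free
module. Applied to `Hom_k(V, V)` this writes `id_V` as `∑ g, g ∘ f ∘ g⁻¹`, and by Higman's
criterion `V` is then a direct summand of a free `k[G]`-module. Finitely generated projective
modules over a local ring are free.
-/

open MonoidAlgebra

namespace MonoidAlgebra

theorem pow_char_pow_eq_algebraMap {k G : Type*} [CommRing k] [CommMonoid G] (p n : ℕ)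
    [ExpChar k p] (hG : ∀ g : G, g ^ p ^ n = 1) (x : k[G]) :
    x ^ p ^ n = algebraMap k k[G] (lift k k G 1 x ^ p ^ n) := by
  have : ExpChar k[G] p := ExpChar.of_injective_algebraMap' k p
  suffices iterateFrobenius k[G] p n =
      (algebraMap k k[G]).comp ((iterateFrobenius k p n).comp (lift k k G 1).toRingHom) from
    congr($this x)
  refine ringHom_ext (fun r => ?_) (fun g => ?_)
  · simp [iterateFrobenius_def]
  · simp [iterateFrobenius_def, hG]

theorem isLocalRing_of_isPGroup {k G : Type*} [Field k] [CommGroup G] [Finite G]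
    (p : ℕ) [Fact p.Prime] [CharP k p] (hG : IsPGroup p G) : IsLocalRing k[G] := by
  obtain ⟨n, hn⟩ := IsPGroup.iff_card.mp hG
  have hexp : ∀ g : G, g ^ p ^ n = 1 := fun g => hn ▸ pow_card_eq_one'
  let ε := lift k k G 1
  have hmax : (RingHom.ker ε).IsMaximal :=
    RingHom.ker_isMaximal_of_surjective ε fun r => ⟨algebraMap k k[G] r, by simp [ε]⟩
  have hnil : nilradical k[G] = RingHom.ker ε := by
    refine le_antisymm (nilradical_le_prime _) fun x hx => mem_nilradical.2 ⟨p ^ n, ?_⟩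
    rw [pow_char_pow_eq_algebraMap p n hexp, RingHom.mem_ker.mp hx,
      zero_pow (expChar_pow_pos k p n).ne', map_zero]
  have : (nilradical k[G]).IsMaximal := hnil ▸ hmax
  exact IsLocalRing.of_isMaximal_nilradical k[G]

variable {k G : Type*} [Semiring k] [Group G] [Fintype G]

theorem eq_sum_single_coeff_one_of_forall_single_mul_eq {a : k[G]}
    (ha : ∀ g : G, single g 1 * a = a) : a = ∑ g : G, single g (a.coeff 1) := by
  have hconst (g : G) : a.coeff g = a.coeff 1 := by
    conv_lhs => rw [← ha g, coeff_single_mul_apply, one_mul, inv_mul_cancel]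
  conv_lhs => rw [← sum_coeff_single a, Finsupp.sum_fintype _ _ (by simp)]
  exact Finset.sum_congr rfl fun g _ => by rw [hconst]

theorem exists_sum_single_smul_eq_of_projective {M : Type*} [AddCommMonoid M] [Module k[G] M]
    [Module.Projective k[G] M] {x : M} (hx : ∀ g : G, single g (1 : k) • x = x) :
    ∃ y : M, ∑ g : G, single g (1 : k) • y = x := by
  obtain ⟨s, hs⟩ := Module.projective_def'.mp ‹Module.Projective k[G] M›
  have hξ (w : M) (g : G) : single g 1 * s x w = s x w := by
    rw [← smul_eq_mul, ← Finsupp.smul_apply, ← map_smul, hx]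
  refine ⟨(s x).sum fun w a => single (1 : G) (a.coeff 1) • w, ?_⟩
  calc ∑ g : G, single g (1 : k) • (s x).sum (fun w a => single (1 : G) (a.coeff 1) • w)
      = (s x).sum fun w a => (∑ g : G, single g (a.coeff 1)) • w := by
        simp only [Finsupp.smul_sum, Finset.sum_smul, smul_smul, single_mul_single, mul_one,
          one_mul]
        exact Finset.sum_comm
    _ = (s x).sum fun w a => a • w :=
        Finsupp.sum_congr fun w _ => by
          rw [← eq_sum_single_coeff_one_of_forall_single_mul_eq (hξ w)]
    _ = x := congr($hs x)

end MonoidAlgebra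

variable {k G : Type*} [CommRing k] [Group G] [Fintype G]

theorem Module.Projective.of_sumOfConjugates_eq_id {M : Type*} [AddCommGroup M] [Module k M]
    [Module k[G] M] [IsScalarTower k k[G] M] [Module.Projective k M] (f : M →ₗ[k] M)
    (hf : f.sumOfConjugates G = LinearMap.id) : Module.Projective k[G] M := by
  let T : (M →₀ k[G]) →ₗ[k[G]] M := Finsupp.linearCombination k[G] id
  obtain ⟨s, hs⟩ := Module.projective_lifting_property (T.restrictScalars k) LinearMap.id
    (Finsupp.linearCombination_id_surjective k[G] M)
  refine .of_split ((s ∘ₗ f).sumOfConjugatesEquivariant G) T (LinearMap.ext fun m => ?_)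
  calc T ((s ∘ₗ f).sumOfConjugatesEquivariant G m)
      = ∑ g : G, single g⁻¹ (1 : k) • T (s (f (single g (1 : k) • m))) := by
        simp [LinearMap.sumOfConjugatesEquivariant_apply, LinearMap.conjugate_apply]
    _ = f.sumOfConjugates G m := by
        simp only [LinearMap.sumOfConjugates_apply, LinearMap.conjugate_apply]
        exact Finset.sum_congr rfl fun g _ => congr(single g⁻¹ (1 : k) • $(congr($hs _)))
    _ = m := by rw [hf, LinearMap.id_apply]

namespace Representation

variable {V : Type*} [AddCommGroup V] [Module k V] (ρ : Representation k G V)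

omit [Fintype G] in
theorem linHom_apply_id (g : G) : ρ.linHom ρ g LinearMap.id = LinearMap.id := by
  ext; simp [linHom_apply]

theorem exists_norm_eq_of_projective [Module.Projective k[G] ρ.asModule] {v : V}
    (hv : ∀ g : G, ρ g v = v) : ∃ w : V, ρ.norm w = v := by
  obtain ⟨w, hw⟩ := MonoidAlgebra.exists_sum_single_smul_eq_of_projective
    (x := ρ.asModuleEquiv.symm v) fun g => ρ.asModuleEquiv.injective <| by
      rw [asModuleEquiv_map_smul, asAlgebraHom_single_one, LinearEquiv.apply_symm_apply, hv]
  refine ⟨ρ.asModuleEquiv w, ?_⟩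
  simpa only [map_sum, asModuleEquiv_map_smul, asAlgebraHom_single_one,
    LinearEquiv.apply_symm_apply, norm, LinearMap.sum_apply] using congr(ρ.asModuleEquiv $hw)

theorem projective_asModule_of_linHom_norm_eq_id [Module.Projective k V] (f : V →ₗ[k] V)
    (hf : (ρ.linHom ρ).norm f = LinearMap.id) : Module.Projective k[G] ρ.asModule := by
  have : Module.Projective k ρ.asModule := .of_equiv ρ.asModuleEquiv.symm
  refine .of_sumOfConjugates_eq_id (ρ.asModuleEquiv.symm.conj f) (LinearMap.ext fun v => ?_)
  apply ρ.asModuleEquiv.injective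
  simp only [LinearMap.sumOfConjugates_apply, LinearMap.conjugate_apply, map_sum,
    asModuleEquiv_map_smul, asAlgebraHom_single_one, LinearEquiv.conj_apply, LinearMap.comp_apply,
    LinearEquiv.symm_symm, LinearEquiv.coe_coe, LinearEquiv.apply_symm_apply, LinearMap.id_apply]
  rw [← Equiv.sum_comp (Equiv.inv G)]
  simpa [norm, linHom_apply] using congr($hf (ρ.asModuleEquiv v))

end Representation

/-- **Freeness of `Hom_k(V,V)` descends to `V`** (for `G` cyclic of order `p`).
Let `k` be a field of characteristic `p`, `G` a cyclic group of order `p`, and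
`V` a finite-dimensional `kG`-module (given by a representation
`ρ : Representation k G V`).  If `Hom_k(V,V)`, with the conjugation `G`-action
`(g·f)(v) = g·f(g⁻¹·v)` (i.e. the representation `ρ.linHom ρ`), is a free
`kG`-module, then `V` is a free `kG`-module. -/
theorem free_of_linHom_free
    (p : ℕ) [Fact p.Prime] (k : Type) [Field k] [CharP k p]
    (G : Type) [Group G] [Fintype G] (hcyc : IsCyclic G) (hcard : Nat.card G = p)
    (V : Type) [AddCommGroup V] [Module k V] [FiniteDimensional k V]
    (ρ : Representation k G V)
    (h : Module.Free (MonoidAlgebra k G) (ρ.linHom ρ).asModule) :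
    Module.Free (MonoidAlgebra k G) ρ.asModule := by
  let : CommGroup G := hcyc.commGroup
  have : IsLocalRing k[G] :=
    isLocalRing_of_isPGroup p (IsPGroup.of_card (n := 1) (by rw [pow_one, hcard]))
  obtain ⟨f, hf⟩ := (ρ.linHom ρ).exists_norm_eq_of_projective ρ.linHom_apply_id
  have : Module.Projective k[G] ρ.asModule := ρ.projective_asModule_of_linHom_norm_eq_id f hf
  have : Module.Finite k[G] ρ.asModule := .of_restrictScalars_finite k k[G] ρ.asModule
  exact Module.free_of_flat_of_isLocalRing
end
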